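/- arXiv:2003.09364 — 6 statements merged into one kernel-verified Lean document; each statement's English description precedes it below -/
import Mathlib

section
/- Let F be a monotonic failure transducer and let C be the set of states lying on a failure cycle, i.e., C = {q ∈ Q | ∃ n ≥ 1, f^(n)(q) = q}. Then the failure transducer F' obtained from F by restricting f and φ to Q \ C represents the same function: O_{F'} = O_F. -/
open scoped NNReal Computability
open Classical

noncomputable section

/-- The free monoid structure on lists (concatenation). -/
instance listMonoid (Ω : Type) : Monoid (List Ω) where
  mul := (· ++ ·)
  one := []
  mul_assoc := List.append_assoc
  one_mul := fun _ => rfl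
  mul_one := List.append_nil

/-- A subsequential transducer.  `step q a = some (q', m)` encodes that both the
transition function `δ q a = q'` and the output function `λ q a = m` are defined
(they have equal domains).  `rho q = some r` encodes that `q` is final with final
output `r`. -/
structure Transducer (A Q M : Type) [Monoid M] where
  start : Q
  step : Q → A → Option (Q × M)
  init : M
  rho : Q → Option M

namespace Transducer

variable {A Q M : Type} [Monoid M]

def delta (T : Transducer A Q M) (q : Q) (a : A) : Option Q := (T.step q a).map Prod.fst

def lam (T : Transducer A Q M) (q : Q) (a : A) : Option M := (T.step q a).map Prod.snd

/-- Generalized (partial) transition function `δ*`. -/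
def dstar (T : Transducer A Q M) : Q → List A → Option Q
  | q, [] => some q
  | q, a :: w => (T.delta q a).bind fun q' => T.dstar q' w

/-- Generalized (partial) output function `λ*`. -/
def lstar (T : Transducer A Q M) : Q → List A → Option M
  | _, [] => some 1
  | q, a :: w => (T.step q a).bind fun x => (T.lstar x.1 w).map fun m => x.2 * m

/-- `O_T^q(α)`, defined iff `δ*(q,α)` is a final state. -/
def O (T : Transducer A Q M) (q : Q) (α : List A) : Option M :=
  (T.dstar q α).bind fun p => (T.lstar q α).bind fun m => (T.rho p).map fun r => m * r

/-- The function `O_T` represented by the transducer. -/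
def Ofull (T : Transducer A Q M) (α : List A) : Option M :=
  (T.O T.start α).map fun m => T.init * m

end Transducer

/-- A subsequential failure transducer: a transducer together with a partial failure
transition function and failure output function (of equal domains, encoded by
`failStep`). -/
structure FailTransducer (A Q M : Type) [Monoid M] extends Transducer A Q M where
  failStep : Q → Option (Q × M)

namespace FailTransducer

variable {A Q M : Type} [Monoid M]

def fail (T : FailTransducer A Q M) (q : Q) : Option Q := (T.failStep q).map Prod.fst

def phi (T : FailTransducer A Q M) (q : Q) : Option M := (T.failStep q).map Prod.snd

/-- The completed transition/output functions `δ_f`, `λ_f`, as the smallest relation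
closed under the two defining clauses. `DF T q a q' m` means `δ_f(q,a) = q'` and
`λ_f(q,a) = m`. -/
inductive DF (T : FailTransducer A Q M) : Q → A → Q → M → Prop
  | base {q : Q} {a : A} {q' : Q} {m : M} :
      T.step q a = some (q', m) → DF T q a q' m
  | fail {q : Q} {a : A} {p : Q} {mf : M} {q' : Q} {m : M} :
      T.step q a = none → T.failStep q = some (p, mf) → DF T p a q' m →
      DF T q a q' (mf * m)

/-- Word extension of the completed transition and output functions. -/
inductive DFStar (T : FailTransducer A Q M) : Q → List A → Q → M → Prop
  | nil {q : Q} : DFStar T q [] q 1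
  | cons {q : Q} {a : A} {w : List A} {q' : Q} {m : M} {q'' : Q} {m' : M} :
      DF T q a q' m → DFStar T q' w q'' m' → DFStar T q (a :: w) q'' (m * m')

/-- `ORel T q α m` holds iff `O_T^q(α)` is defined and equal to `m`. -/
def ORel (T : FailTransducer A Q M) (q : Q) (α : List A) (m : M) : Prop :=
  ∃ p m' r, DFStar T q α p m' ∧ T.rho p = some r ∧ m = m' * r

/-- `OFullRel T α m` holds iff `O_T(α)` is defined and equal to `m`. -/
def OFullRel (T : FailTransducer A Q M) (α : List A) (m : M) : Prop :=
  ∃ m', T.ORel T.start α m' ∧ m = T.init * m'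

/-- The completed transition/output as a partial function (noncomputable). -/
def dfFun (T : FailTransducer A Q M) (q : Q) (a : A) : Option (Q × M) :=
  if h : ∃ x : Q × M, DF T q a x.1 x.2 then some h.choose else none

/-- Word extension of the completed transition/output as a partial function. -/
def dfStarFun (T : FailTransducer A Q M) (q : Q) (α : List A) : Option (Q × M) :=
  if h : ∃ x : Q × M, DFStar T q α x.1 x.2 then some h.choose else none

/-- `O_T^q` as a partial function. -/
def Ofun (T : FailTransducer A Q M) (q : Q) (α : List A) : Option M :=
  if h : ∃ m, T.ORel q α m then some h.choose else none

/-- `O_T` as a partial function. -/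
def OfullFun (T : FailTransducer A Q M) (α : List A) : Option M :=
  (T.Ofun T.start α).map fun m => T.init * m

/-- A failure transducer is monotonic if failure transitions preserve finality and
enabled input symbols. -/
def Monotonic (T : FailTransducer A Q M) : Prop :=
  ∀ q p, T.fail q = some p →
    ((T.rho q).isSome → (T.rho p).isSome) ∧
    ∀ a, (T.delta q a).isSome → (T.delta p a).isSome

/-- `n`-fold iteration of the failure transition function. -/
def failIter (T : FailTransducer A Q M) : ℕ → Q → Option Q
  | 0, q => some q
  | n + 1, q => (T.fail q).bind (T.failIter n)

/-- No state lies on a failure cycle. -/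
def NoFailCycles (T : FailTransducer A Q M) : Prop :=
  ∀ q n, 0 < n → T.failIter n q ≠ some q

/-- A failure transducer over `ℝ≥0` is probabilistic if the function it represents
is a probability distribution over `Σ*`. -/
def Probabilistic (F : FailTransducer A Q ℝ≥0) : Prop :=
  ∑' α : List A, ((F.OfullFun α).getD 0) = 1

end FailTransducer

/-- The composition `T ∘ F` of a transducer `T` with outputs in `Ω* × M` with a
failure transducer `F` over `Ω` (Definition 4). -/
def compStep {A Ω Q₁ Q₂ M : Type} [CommMonoid M] (T : Transducer A Q₁ (List Ω × M))
    (F : FailTransducer Ω Q₂ M) (p : Q₁ × Q₂) (a : A) : Option ((Q₁ × Q₂) × M) :=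
  (T.step p.1 a).bind fun x =>
    match x.2.1 with
    | [] => some ((x.1, p.2), x.2.2)
    | ω :: _ =>
      if (F.delta p.2 ω).isSome then
        (F.dfStarFun p.2 x.2.1).map fun y => ((x.1, y.1), x.2.2 * y.2)
      else none

def comp {A Ω Q₁ Q₂ M : Type} [CommMonoid M] (T : Transducer A Q₁ (List Ω × M))
    (F : FailTransducer Ω Q₂ M) : FailTransducer A (Q₁ × Q₂) M where
  start := (T.start, ((F.dfStarFun F.start T.init.1).map Prod.fst).getD F.start)
  step := compStep T F
  init := T.init.2 * F.init * ((F.dfStarFun F.start T.init.1).map Prod.snd).getD 1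
  rho := fun p => (T.rho p.1).bind fun x =>
    (F.dfStarFun p.2 x.1).bind fun y => (F.rho y.1).map fun r => x.2 * y.2 * r
  failStep := fun p => (F.failStep p.2).map fun y => ((p.1, y.1), y.2)

/-- The Kleene star of a transducer `V` (Definition 16): transitions entering a final
state are redirected to the initial state, which becomes the unique final state with
trivial final output; the initial output becomes trivial. -/
def kstar {A Q N : Type} [Monoid N] (V : Transducer A Q N) : Transducer A Q N where
  start := V.start
  step := fun p a => (V.step p a).map fun x =>
    ((if (V.rho x.1).isSome then V.start else x.1), x.2)
  init := 1
  rho := fun q => if q = V.start then some 1 else none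

/-- `O_T(α ∣ β)` for a transducer with outputs in `Ω* × ℝ≥0`. -/
def condVal {A Ω Q : Type} (T : Transducer A Q (List Ω × ℝ≥0)) (β : List Ω)
    (α : List A) : ℝ≥0 :=
  match T.Ofull α with
  | some x => if x.1 = β then x.2 else 0
  | none => 0

/-- A conditional probabilistic transducer: for every `β` in the first projection of
the range of `O_T`, the conditional outputs `O_T(· ∣ β)` sum to `1`. -/
def CondProb {A Ω Q : Type} (T : Transducer A Q (List Ω × ℝ≥0)) : Prop :=
  ∀ β : List Ω, (∃ α x, T.Ofull α = some x ∧ x.1 = β) →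
    ∑' α : List A, condVal T β α = 1

end

/-!
States on a failure cycle never use their failure transition. Indeed, if `δ_f(q, a)` is
defined, some `p = f^(k)(q)` has `δ(p, a)` defined; when `f^(n)(q) = q`, the state `q` is
reached again from `p` along failure transitions, and monotonicity carries definedness of
`δ(·, a)` along them back to `q`. So deleting those failure transitions leaves `δ_f`, `λ_f`,
and hence `O_F`, unchanged.
-/

namespace FailTransducer

variable {A Q M : Type} [Monoid M]

def OnFailCycle (T : FailTransducer A Q M) (q : Q) : Prop :=
  ∃ n, 0 < n ∧ T.failIter n q = some q

theorem failIter_add (T : FailTransducer A Q M) (m n : ℕ) (q : Q) :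
    T.failIter (m + n) q = (T.failIter m q).bind (T.failIter n) := by
  induction m generalizing q with
  | zero => simp [failIter]
  | succ k ih =>
    rw [Nat.add_right_comm]
    simp only [failIter, Option.bind_assoc, ih]

theorem failIter_mul_of_failIter_eq_self (T : FailTransducer A Q M) {n : ℕ} {q : Q}
    (h : T.failIter n q = some q) (c : ℕ) : T.failIter (c * n) q = some q := by
  induction c with
  | zero => simp [failIter]
  | succ c ih => rw [Nat.succ_mul, failIter_add, ih, Option.bind_some, h]

theorem Monotonic.delta_isSome_of_failIter {T : FailTransducer A Q M} (hT : T.Monotonic)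
    {a : A} {j : ℕ} {p r : Q} (h : T.failIter j p = some r) (hp : (T.delta p a).isSome) :
    (T.delta r a).isSome := by
  induction j generalizing p with
  | zero => exact Option.some_injective _ h ▸ hp
  | succ j ih =>
    obtain ⟨p', hp', hr⟩ := Option.bind_eq_some_iff.mp h
    exact ih hr ((hT p p' hp').2 a hp)

theorem DF.exists_failIter_delta_isSome {T : FailTransducer A Q M} {q q' : Q} {a : A}
    {m : M} (h : T.DF q a q' m) : ∃ k p, T.failIter k q = some p ∧ (T.delta p a).isSome := by
  induction h with
  | base hstep => exact ⟨0, _, rfl, by simp [Transducer.delta, hstep]⟩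
  | fail _ hfs _ ih =>
    obtain ⟨k, p, hk, hp⟩ := ih
    exact ⟨k + 1, p, by simp [failIter, FailTransducer.fail, hfs, hk], hp⟩

theorem Monotonic.delta_isSome_of_DF_of_onFailCycle {T : FailTransducer A Q M}
    (hT : T.Monotonic) {q q' : Q} {a : A} {m : M} (hq : T.OnFailCycle q)
    (h : T.DF q a q' m) : (T.delta q a).isSome := by
  obtain ⟨n, hn, hcyc⟩ := hq
  obtain ⟨k, p, hk, hp⟩ := h.exists_failIter_delta_isSome
  have hback : T.failIter (k + (k * n - k)) q = some q := by
    rw [Nat.add_sub_cancel' (Nat.le_mul_of_pos_right k hn)]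
    exact T.failIter_mul_of_failIter_eq_self hcyc k
  rw [failIter_add, hk, Option.bind_some] at hback
  exact hT.delta_isSome_of_failIter hback hp

theorem DF.of_failStep_restrict {T T' : FailTransducer A Q M} (hstep : T'.step = T.step)
    (hfail : ∀ q x, T'.failStep q = some x → T.failStep q = some x)
    {q q' : Q} {a : A} {m : M} (h : T'.DF q a q' m) : T.DF q a q' m := by
  induction h with
  | base hs => exact .base (hstep ▸ hs)
  | fail hnone hfs _ ih => exact .fail (hstep ▸ hnone) (hfail _ _ hfs) ih

theorem DFStar.of_DF {T T' : FailTransducer A Q M}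
    (hDF : ∀ {q a q' m}, T'.DF q a q' m → T.DF q a q' m)
    {q q' : Q} {α : List A} {m : M} (h : T'.DFStar q α q' m) : T.DFStar q α q' m := by
  induction h with
  | nil => exact .nil
  | cons hd _ ih => exact .cons (hDF hd) ih

theorem OFullRel.of_DF {T T' : FailTransducer A Q M}
    (hbase : T'.toTransducer = T.toTransducer)
    (hDF : ∀ {q a q' m}, T'.DF q a q' m → T.DF q a q' m)
    {α : List A} {m : M} (h : T'.OFullRel α m) : T.OFullRel α m := by
  obtain ⟨m', ⟨p, m'', r, hstar, hr, rfl⟩, rfl⟩ := h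
  have hstart : T'.start = T.start := congrArg Transducer.start hbase
  have hrho : T'.rho = T.rho := congrArg Transducer.rho hbase
  have hinit : T'.init = T.init := congrArg Transducer.init hbase
  exact ⟨_, ⟨p, m'', r, hstart ▸ hstar.of_DF hDF, hrho ▸ hr, rfl⟩, by rw [hinit]⟩

variable {F F' : FailTransducer A Q M}

theorem DF_iff_of_failStep_eq_ite_onFailCycle (hF : F.Monotonic)
    (hbase : F'.toTransducer = F.toTransducer)
    (hfail : ∀ q, F'.failStep q = if F.OnFailCycle q then none else F.failStep q)
    {q q' : Q} {a : A} {m : M} : F'.DF q a q' m ↔ F.DF q a q' m := by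
  have hstep : F'.step = F.step := congrArg Transducer.step hbase
  refine ⟨DF.of_failStep_restrict hstep fun q x h => ?_, fun h => ?_⟩
  · rw [hfail] at h
    split_ifs at h
    exact h
  · induction h with
    | base hs => exact .base (hstep ▸ hs)
    | @fail q a p mf q' m hnone hfs hdf ih =>
      have hq : ¬ F.OnFailCycle q := fun hq => by
        simpa [Transducer.delta, hnone] using
          hF.delta_isSome_of_DF_of_onFailCycle hq (.fail hnone hfs hdf)
      exact .fail (hstep ▸ hnone) (by rw [hfail, if_neg hq, hfs]) ih

end FailTransducer

/-- removing the failure transitions (and failure outputs) of states on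
failure cycles from a monotonic failure transducer does not change the represented
function. -/
theorem stmt2 {A Q M : Type} [Monoid M] (F F' : FailTransducer A Q M)
    (hmono : F.Monotonic)
    (hbase : F'.toTransducer = F.toTransducer)
    (hfail : ∀ q, F'.failStep q =
      if ∃ n, 0 < n ∧ F.failIter n q = some q then none else F.failStep q) :
    ∀ α m, F'.OFullRel α m ↔ F.OFullRel α m := by
  have hDF : ∀ {q a q' m}, F'.DF q a q' m ↔ F.DF q a q' m :=
    FailTransducer.DF_iff_of_failStep_eq_ite_onFailCycle hmono hbase hfail
  exact fun α m => ⟨FailTransducer.OFullRel.of_DF hbase hDF.mp,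
    FailTransducer.OFullRel.of_DF hbase.symm hDF.mpr⟩
end

section
/- With T and F as in the composition construction, for every pair ⟨p₁,p₂⟩ and word α ∈ Σ*, if δ₁*(p₁,α) is defined and δ₂_{f₂}*(p₂, Proj₁(λ₁*(p₁,α))) is defined, then δ_f*(⟨p₁,p₂⟩, α) is defined in T∘F. -/
open scoped NNReal Computability
open Classical

/-
Reading a letter `a`, `T` moves from `p₁` and emits a word `γ`. If `γ = ω :: _`, `T ∘ F`
follows the failure transitions of `F` from `p₂` to the first state with an `ω`-transition
and reads `γ` from there with the completed transition function of `F`. This is exactly the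
path along which `F` completes `γ` from `p₂`, so `T ∘ F` completes `a` whenever `F` completes
`γ`. Since `Proj₁(λ₁*(p₁,α))` is the concatenation of the emitted words, induction along `α`
finishes the proof.
-/

theorem Transducer.lstar_cons_eq_some {A Q M : Type} [Monoid M] {T : Transducer A Q M}
    {q : Q} {a : A} {α : List A} {m : M} (h : T.lstar q (a :: α) = some m) :
    ∃ q' m₁ m₂, T.step q a = some (q', m₁) ∧ T.lstar q' α = some m₂ ∧ m = m₁ * m₂ := by
  simp only [Transducer.lstar, Option.bind_eq_some_iff, Option.map_eq_some_iff] at h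
  obtain ⟨⟨q', m₁⟩, hs, m₂, hl, rfl⟩ := h
  exact ⟨q', m₁, m₂, hs, hl, rfl⟩

namespace FailTransducer

variable {A Q M : Type} [Monoid M] {T : FailTransducer A Q M}

theorem DF.unique {q : Q} {a : A} {q₁ q₂ : Q} {m₁ m₂ : M}
    (h₁ : T.DF q a q₁ m₁) (h₂ : T.DF q a q₂ m₂) : q₁ = q₂ ∧ m₁ = m₂ := by
  induction h₁ generalizing q₂ m₂ with
  | base hs =>
    cases h₂ with
    | base hs' => simpa [hs] using hs'
    | fail hn _ _ => simp [hs] at hn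
  | fail hn hf _ ih =>
    cases h₂ with
    | base hs' => simp [hs'] at hn
    | fail _ hf' hd' =>
      obtain ⟨rfl, rfl⟩ := Prod.mk.inj (Option.some.inj (hf.symm.trans hf'))
      obtain ⟨rfl, rfl⟩ := ih hd'
      exact ⟨rfl, rfl⟩

theorem DFStar.unique {q : Q} {w : List A} {q₁ q₂ : Q} {m₁ m₂ : M}
    (h₁ : T.DFStar q w q₁ m₁) (h₂ : T.DFStar q w q₂ m₂) : q₁ = q₂ ∧ m₁ = m₂ := by
  induction h₁ generalizing q₂ m₂ with
  | nil => cases h₂; exact ⟨rfl, rfl⟩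
  | cons hd _ ih =>
    cases h₂ with
    | cons hd' hs' =>
      obtain ⟨rfl, rfl⟩ := hd.unique hd'
      obtain ⟨rfl, rfl⟩ := ih hs'
      exact ⟨rfl, rfl⟩

theorem DFStar.of_append {q q'' : Q} {w₁ w₂ : List A} {m : M}
    (h : T.DFStar q (w₁ ++ w₂) q'' m) :
    ∃ q' m₁ m₂, T.DFStar q w₁ q' m₁ ∧ T.DFStar q' w₂ q'' m₂ := by
  induction w₁ generalizing q m with
  | nil => exact ⟨q, 1, m, .nil, h⟩
  | cons a w₁ ih =>
    cases h with
    | cons hd hs =>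
      obtain ⟨q', m₁, m₂, h₁, h₂⟩ := ih hs
      exact ⟨q', _, m₂, .cons hd h₁, h₂⟩

theorem dfStarFun_eq_some {q q' : Q} {w : List A} {m : M} (h : T.DFStar q w q' m) :
    T.dfStarFun q w = some (q', m) := by
  have hex : ∃ x : Q × M, T.DFStar q w x.1 x.2 := ⟨(q', m), h⟩
  obtain ⟨h₁, h₂⟩ := hex.choose_spec.unique h
  rw [dfStarFun, dif_pos hex, ← h₁, ← h₂]

theorem isSome_dfStarFun_iff {q : Q} {w : List A} :
    (T.dfStarFun q w).isSome ↔ ∃ q' m, T.DFStar q w q' m := by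
  rw [dfStarFun]
  split_ifs with hex <;> simpa [Prod.exists] using hex

end FailTransducer

section Composition

open FailTransducer

variable {A Ω Q₁ Q₂ M : Type} [CommMonoid M]
  (T : Transducer A Q₁ (List Ω × M)) (F : FailTransducer Ω Q₂ M)

theorem comp_DF_of_DF_cons {p₂ q : Q₂} {ω : Ω} {m : M} (hω : F.DF p₂ ω q m)
    {rest : List Ω} {r : Q₂} {m' : M} (hrest : F.DFStar q rest r m')
    {a : A} {p₁ q₁ : Q₁} {o : M} (hT : T.step p₁ a = some (q₁, (ω :: rest, o))) :
    ∃ mm, (comp T F).DF (p₁, p₂) a (q₁, r) mm := by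
  induction hω with
  | @base p₂ ω _ m hs =>
    have hdelta : (F.delta p₂ ω).isSome := by simp [Transducer.delta, hs]
    have hread := dfStarFun_eq_some (.cons (.base hs) hrest)
    exact ⟨o * (m * m'), .base (by simp [comp, compStep, hT, hdelta, hread])⟩
  | @fail p₂ ω p mf _ _ hn hf _ ih =>
    have hdelta : (F.delta p₂ ω).isSome = false := by simp [Transducer.delta, hn]
    obtain ⟨mm, hmm⟩ := ih hrest hT
    refine ⟨mf * mm, .fail ?_ ?_ hmm⟩
    · simp [comp, compStep, hT, hdelta]
    · simp [comp, hf]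

theorem comp_DF_of_DFStar {a : A} {p₁ q₁ : Q₁} {p₂ r : Q₂} {γ : List Ω} {o m : M}
    (hT : T.step p₁ a = some (q₁, (γ, o))) (hF : F.DFStar p₂ γ r m) :
    ∃ mm, (comp T F).DF (p₁, p₂) a (q₁, r) mm := by
  cases hF with
  | nil => exact ⟨o, .base (by simp [comp, compStep, hT])⟩
  | cons hω hrest => exact comp_DF_of_DF_cons T F hω hrest hT

theorem comp_DFStar_of_lstar {p₁ : Q₁} {p₂ r : Q₂} {α : List A} {β : List Ω} {o m : M}
    (hT : T.lstar p₁ α = some (β, o)) (hF : F.DFStar p₂ β r m) :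
    ∃ q m, (comp T F).DFStar (p₁, p₂) α q m := by
  induction α generalizing p₁ p₂ β o m with
  | nil => exact ⟨_, _, .nil⟩
  | cons a α ih =>
    obtain ⟨q₁, ⟨γ, o₁⟩, ⟨β', o'⟩, hstep, hl, hprod⟩ := Transducer.lstar_cons_eq_some hT
    obtain rfl : β = γ ++ β' := congrArg Prod.fst hprod
    obtain ⟨q₂, m₁, m₂, hγ, hβ'⟩ := hF.of_append
    obtain ⟨mm, hmm⟩ := comp_DF_of_DFStar T F hstep hγ
    obtain ⟨q, m, hq⟩ := ih hl hβ'
    exact ⟨q, mm * m, .cons hmm hq⟩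

end Composition

theorem stmt6_general {A Ω Q₁ Q₂ M : Type} [CommMonoid M]
    (T : Transducer A Q₁ (List Ω × M)) (F : FailTransducer Ω Q₂ M) :
    ∀ p₁ p₂ (α : List A) q₁ β o₁, T.dstar p₁ α = some q₁ →
      T.lstar p₁ α = some (β, o₁) → (F.dfStarFun p₂ β).isSome →
      ∃ q m, (comp T F).DFStar (p₁, p₂) α q m := by
  intro p₁ p₂ α _ β o₁ _ hT hF
  obtain ⟨r, m, hβ⟩ := FailTransducer.isSome_dfStarFun_iff.mp hF
  exact comp_DFStar_of_lstar T F hT hβ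

/-- if `δ₁*(p₁,α)` is defined and the completed word transition of `F`
on `Proj₁(λ₁*(p₁,α))` from `p₂` is defined, then `δ_f*(⟨p₁,p₂⟩,α)` is defined in
`T∘F`. -/
theorem stmt6 {A Ω Q₁ Q₂ M : Type} [CommMonoid M]
    (T : Transducer A Q₁ (List Ω × M)) (F : FailTransducer Ω Q₂ M)
    (hnc : F.NoFailCycles) :
    ∀ p₁ p₂ (α : List A) q₁ β o₁, T.dstar p₁ α = some q₁ →
      T.lstar p₁ α = some (β, o₁) → (F.dfStarFun p₂ β).isSome →
      ∃ q m, (comp T F).DFStar (p₁, p₂) α q m :=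
  stmt6_general T F
end

section
/- If F is a monotonic failure transducer and for every p ∈ Dom(f₂): (i) for all α ∈ Proj₁(Rng(λ₁)), if δ₂_{f₂}*(p,α) is defined then δ₂_{f₂}*(f₂(p),α) is defined, and (ii) for all α ∈ Proj₁(Rng(ρ₁)), if δ₂_{f₂}*(p,α) ∈ F₂ then δ₂_{f₂}*(f₂(p),α) ∈ F₂, then the composition T∘F is a monotonic failure transducer. -/
open scoped NNReal Computability
open Classical

/-
A failure transition of `T ∘ F` only moves the `F`-component, so both clauses of
monotonicity reduce to statements about `F`: finality of `⟨p₁, p₂⟩` means that `F` reads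
the final output of `T` at `p₁` from `p₂` into a final state, which (ii) transfers to
`f₂(p₂)`; a transition on `a` from `⟨p₁, p₂⟩` needs `F` to have an ordinary transition on
the first letter of the `T`-output (transferred by monotonicity of `F`) and to read the
whole output (transferred by (i)).
-/

namespace FailTransducer

variable {A Q M : Type} [Monoid M]

theorem dfStarFun_nil_isSome (F : FailTransducer A Q M) (q : Q) :
    (F.dfStarFun q []).isSome := by
  rw [dfStarFun, dif_pos ⟨(q, 1), DFStar.nil⟩]
  rfl

end FailTransducer

section Composition

variable {A Ω Q₁ Q₂ M : Type} [CommMonoid M]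
  (T : Transducer A Q₁ (List Ω × M)) (F : FailTransducer Ω Q₂ M)

theorem comp_fail (q₁ : Q₁) (q₂ : Q₂) :
    (comp T F).fail (q₁, q₂) = (F.fail q₂).map (q₁, ·) := by
  simp only [FailTransducer.fail, comp, Option.map_map]
  rfl

theorem comp_rho_isSome_iff (q₁ : Q₁) (q₂ : Q₂) :
    ((comp T F).rho (q₁, q₂)).isSome ↔ ∃ x, T.rho q₁ = some x ∧
      ∃ y, F.dfStarFun q₂ x.1 = some y ∧ (F.rho y.1).isSome := by
  simp only [comp, Option.isSome_bind, Option.isSome_map, Option.any_eq_true]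

theorem comp_delta_isSome_iff (q₁ : Q₁) (q₂ : Q₂) (a : A) :
    ((comp T F).delta (q₁, q₂) a).isSome ↔ ∃ x, T.step q₁ a = some x ∧
      (∀ ω ∈ x.2.1.head?, (F.delta q₂ ω).isSome) ∧ (F.dfStarFun q₂ x.2.1).isSome := by
  rw [Transducer.delta, Option.isSome_map]
  change (compStep T F (q₁, q₂) a).isSome ↔ _
  rw [compStep, Option.isSome_bind, Option.any_eq_true]
  refine exists_congr fun ⟨q₁', β, o⟩ => and_congr_right fun _ => ?_
  cases β with
  | nil => simp [F.dfStarFun_nil_isSome q₂]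
  | cons ω β =>
    by_cases hω : (F.delta q₂ ω).isSome <;> simp [hω]

end Composition

theorem stmt9_general {A Ω Q₁ Q₂ M : Type} [CommMonoid M]
    (T : Transducer A Q₁ (List Ω × M)) (F : FailTransducer Ω Q₂ M)
    (hmono : F.Monotonic)
    (h1 : ∀ p r, F.fail p = some r → ∀ p₁ a β o, T.lam p₁ a = some (β, o) →
      (F.dfStarFun p β).isSome → (F.dfStarFun r β).isSome)
    (h2 : ∀ p r, F.fail p = some r → ∀ p₁ β o, T.rho p₁ = some (β, o) →
      ∀ q₂ m₂, F.dfStarFun p β = some (q₂, m₂) → (F.rho q₂).isSome →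
        ∃ q₂' m₂', F.dfStarFun r β = some (q₂', m₂') ∧ (F.rho q₂').isSome) :
    (comp T F).Monotonic := by
  rintro ⟨q₁, q₂⟩ p hp
  rw [comp_fail, Option.map_eq_some_iff] at hp
  obtain ⟨r, hr, rfl⟩ := hp
  refine ⟨fun hfin => ?_, fun a htrans => ?_⟩
  · obtain ⟨⟨β, o⟩, hT, ⟨q, m⟩, hF, hq⟩ := (comp_rho_isSome_iff T F q₁ q₂).1 hfin
    obtain ⟨q', m', hF', hq'⟩ := h2 q₂ r hr q₁ β o hT q m hF hq
    exact (comp_rho_isSome_iff T F q₁ r).2 ⟨(β, o), hT, (q', m'), hF', hq'⟩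
  · obtain ⟨⟨q₁', β, o⟩, hT, hhead, hread⟩ := (comp_delta_isSome_iff T F q₁ q₂ a).1 htrans
    have hlam : T.lam q₁ a = some (β, o) := by simp [Transducer.lam, hT]
    exact (comp_delta_isSome_iff T F q₁ r a).2 ⟨_, hT, fun ω hω => (hmono q₂ r hr).2 ω
      (hhead ω hω), h1 q₂ r hr q₁ a β o hlam hread⟩

/-- under the two compatibility conditions on failure transitions of a
monotonic `F` with respect to the outputs of `T`, the composition `T∘F` is
monotonic. -/
theorem stmt9 {A Ω Q₁ Q₂ M : Type} [CommMonoid M]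
    (T : Transducer A Q₁ (List Ω × M)) (F : FailTransducer Ω Q₂ M)
    (hnc : F.NoFailCycles) (hmono : F.Monotonic)
    (h1 : ∀ p r, F.fail p = some r → ∀ p₁ a β o, T.lam p₁ a = some (β, o) →
      (F.dfStarFun p β).isSome → (F.dfStarFun r β).isSome)
    (h2 : ∀ p r, F.fail p = some r → ∀ p₁ β o, T.rho p₁ = some (β, o) →
      ∀ q₂ m₂, F.dfStarFun p β = some (q₂, m₂) → (F.rho q₂).isSome →
        ∃ q₂' m₂', F.dfStarFun r β = some (q₂', m₂') ∧ (F.rho q₂').isSome) :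
    (comp T F).Monotonic :=
  stmt9_general T F hmono h1 h2
end

section
/- Let V be a transducer whose domain Dom(O_V) is prefix-free, with no transitions entering the initial state s₁, no transitions leaving final states, s₁ ∉ F₁, ι₁ = ⟨ε,1̄⟩, and all final outputs equal to ⟨ε,1̄⟩. Let V* be its Kleene star (final states redirected to s₁). Then Dom(O_{V*}) = (Dom(O_V))*, the Kleene star of the language Dom(O_V). -/
open scoped NNReal Computability
open Classical

/-! The states reached by a word are the same in `V` and in `V*` as long as the run does not hit
a final state of `V`; hitting one sends the run of `V*` back to the start. Since final states of
`V` have no outgoing transitions, this happens exactly at the end of each accepted factor, and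
since no transition of `V` enters the start, a run of `V*` can return to the start only in this
way. So a run of `V*` from the start ends at the start iff the word is a concatenation of words
accepted by `V`. -/

namespace Transducer

variable {A Q M : Type} [Monoid M]

def domFrom (T : Transducer A Q M) (q : Q) : Language A :=
  {α | ∃ p, T.dstar q α = some p ∧ (T.rho p).isSome}

@[simp]
theorem mem_domFrom {T : Transducer A Q M} {q : Q} {α : List A} :
    α ∈ T.domFrom q ↔ ∃ p, T.dstar q α = some p ∧ (T.rho p).isSome :=
  Iff.rfl

theorem dstar_cons (T : Transducer A Q M) (q : Q) (a : A) (w : List A) :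
    T.dstar q (a :: w) = (T.step q a).bind fun x => T.dstar x.1 w := by
  cases hs : T.step q a <;> simp [dstar, delta, hs]

theorem dstar_append (T : Transducer A Q M) (α β : List A) (q : Q) :
    T.dstar q (α ++ β) = (T.dstar q α).bind fun p => T.dstar p β := by
  induction α generalizing q with
  | nil => rfl
  | cons a w ih => cases hs : T.step q a <;> simp [dstar_cons, hs, ih]

theorem isSome_lstar_of_isSome_dstar (T : Transducer A Q M) {q : Q} {α : List A}
    (h : (T.dstar q α).isSome) : (T.lstar q α).isSome := by
  induction α generalizing q with
  | nil => rfl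
  | cons a w ih =>
    cases hs : T.step q a with
    | none => simp [dstar_cons, hs] at h
    | some x => simpa [lstar, hs] using ih (by simpa [dstar_cons, hs] using h)

theorem isSome_O_iff (T : Transducer A Q M) (q : Q) (α : List A) :
    (T.O q α).isSome ↔ α ∈ T.domFrom q := by
  have hl := T.isSome_lstar_of_isSome_dstar (q := q) (α := α)
  cases hd : T.dstar q α <;> cases h : T.lstar q α <;>
    simp_all [O, Option.isSome_map]

theorem setOf_isSome_Ofull (T : Transducer A Q M) :
    ({α | (T.Ofull α).isSome} : Language A) = T.domFrom T.start :=
  Language.ext fun α => by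
    change (T.Ofull α).isSome ↔ _
    rw [Ofull, Option.isSome_map, isSome_O_iff]

end Transducer

section KleeneStar

open Transducer

variable {A Q M : Type} [Monoid M] (V : Transducer A Q M)

theorem kstar_dstar_cons (q : Q) (a : A) (w : List A) :
    (kstar V).dstar q (a :: w) = (V.step q a).bind fun x =>
      (kstar V).dstar (if (V.rho x.1).isSome then V.start else x.1) w := by
  cases hs : V.step q a <;> simp [dstar_cons, kstar, hs]

theorem mem_kstar_domFrom_iff (q : Q) (α : List A) :
    α ∈ (kstar V).domFrom q ↔ (kstar V).dstar q α = some V.start := by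
  simp [kstar]

theorem kstar_dstar_eq_start_of_mem_domFrom
    (hnoout : ∀ q a, (V.rho q).isSome → V.delta q a = none) {q : Q} {α : List A}
    (hα : α ≠ []) (h : α ∈ V.domFrom q) : (kstar V).dstar q α = some V.start := by
  induction α generalizing q with
  | nil => exact absurd rfl hα
  | cons a w ih =>
    obtain ⟨p, hd, hp⟩ := h
    cases hs : V.step q a with
    | none => simp [dstar_cons, hs] at hd
    | some x =>
      rw [dstar_cons, hs, Option.bind_some] at hd
      rw [kstar_dstar_cons, hs, Option.bind_some]
      cases w with
      | nil =>
        obtain rfl : x.1 = p := Option.some_injective _ hd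
        simp [hp, dstar]
      | cons b w' =>
        have hx : ¬ (V.rho x.1).isSome := fun hfin => by
          simp [dstar, hnoout x.1 b hfin] at hd
        rw [if_neg hx]
        exact ih (List.cons_ne_nil b w') ⟨p, hd, hp⟩

theorem mem_domFrom_mul_kstar_of_kstar_dstar_eq_start
    (hnoin : ∀ p a, V.delta p a ≠ some V.start) {q : Q} {α : List A}
    (hα : α ≠ []) (h : (kstar V).dstar q α = some V.start) :
    α ∈ V.domFrom q * (V.domFrom V.start)∗ := by
  induction α generalizing q with
  | nil => exact absurd rfl hα
  | cons a w ih =>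
    rw [kstar_dstar_cons] at h
    cases hs : V.step q a with
    | none => simp [hs] at h
    | some x =>
      rw [hs, Option.bind_some] at h
      by_cases hfin : (V.rho x.1).isSome
      · rw [if_pos hfin] at h
        have hw : w ∈ (V.domFrom V.start)∗ := by
          rcases eq_or_ne w [] with rfl | hw
          · exact Language.nil_mem_kstar _
          · exact mul_kstar_le_kstar (a := V.domFrom V.start) (ih hw h)
        exact Language.mem_mul.2
          ⟨[a], ⟨x.1, by simp [delta, hs, dstar], hfin⟩, w, hw, rfl⟩
      · rw [if_neg hfin] at h
        have hw : w ≠ [] := by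
          rintro rfl
          exact hnoin q a (by simpa [delta, hs, dstar] using h)
        obtain ⟨β, ⟨p, hβ, hp⟩, γ, hγ, rfl⟩ := Language.mem_mul.1 (ih hw h)
        exact Language.mem_mul.2
          ⟨a :: β, ⟨p, by simp [dstar_cons, hs, hβ], hp⟩, γ, hγ, rfl⟩

theorem kstar_domFrom_start
    (hnoin : ∀ p a, V.delta p a ≠ some V.start)
    (hnoout : ∀ q a, (V.rho q).isSome → V.delta q a = none)
    (hsnf : V.rho V.start = none) :
    (kstar V).domFrom V.start = (V.domFrom V.start)∗ := by
  apply le_antisymm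
  · intro α (h : α ∈ (kstar V).domFrom V.start)
    rw [mem_kstar_domFrom_iff] at h
    rcases eq_or_ne α [] with rfl | hα
    · exact Language.nil_mem_kstar _
    · exact mul_kstar_le_kstar (a := V.domFrom V.start)
        (mem_domFrom_mul_kstar_of_kstar_dstar_eq_start V hnoin hα h)
  · refine kstar_le_of_mul_le_right ?_ ?_
    · rintro α (rfl : α = [])
      exact (mem_kstar_domFrom_iff V _ _).2 rfl
    · intro α (h : α ∈ V.domFrom V.start * (kstar V).domFrom V.start)
      obtain ⟨β, hβ, γ, hγ, rfl⟩ := Language.mem_mul.1 h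
      have hβne : β ≠ [] := by
        rintro rfl
        obtain ⟨p, hp, hfin⟩ := hβ
        simp_all [dstar]
      rw [mem_kstar_domFrom_iff] at hγ
      refine (mem_kstar_domFrom_iff V _ _).2 ?_
      rw [dstar_append, kstar_dstar_eq_start_of_mem_domFrom V hnoout hβne hβ, Option.bind_some, hγ]

end KleeneStar

theorem stmt10_general {A Ω Q M : Type} [CommMonoid M] (V : Transducer A Q (List Ω × M))
    (hnoin : ∀ p a, V.delta p a ≠ some V.start)
    (hnoout : ∀ q a, (V.rho q).isSome → V.delta q a = none)
    (hsnf : V.rho V.start = none) :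
    ({α | ((kstar V).Ofull α).isSome} : Language A) =
      @KStar.kstar (Language A) _ ({α | (V.Ofull α).isSome} : Language A) := by
  rw [Transducer.setOf_isSome_Ofull, Transducer.setOf_isSome_Ofull]
  exact kstar_domFrom_start V hnoin hnoout hsnf

/-- the domain of the Kleene star transducer `V*` is the Kleene star
of the language `Dom(O_V)`. -/
theorem stmt10 {A Ω Q M : Type} [CommMonoid M] (V : Transducer A Q (List Ω × M))
    (hpf : ∀ α γ, (V.Ofull α).isSome → (V.Ofull (α ++ γ)).isSome → γ = [])
    (hnoin : ∀ p a, V.delta p a ≠ some V.start)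
    (hnoout : ∀ q a, (V.rho q).isSome → V.delta q a = none)
    (hsnf : V.rho V.start = none)
    (hinit : V.init = 1)
    (hrho1 : ∀ q m, V.rho q = some m → m = 1) :
    ({α | ((kstar V).Ofull α).isSome} : Language A) =
      @KStar.kstar (Language A) _ ({α | (V.Ofull α).isSome} : Language A) :=
  stmt10_general V hnoin hnoout hsnf
end

section
/- If V is a conditional probabilistic transducer satisfying the Kleene-star preconditions, then its Kleene star V* is also conditional probabilistic: for every β = b₁⋯bₙ ∈ Proj₁(Rng(O_{V*})), the sum Σ_{α : O_{V*}(α) = ⟨β, m⟩} O_{V*}(α | β) equals 1. -/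
open scoped NNReal Computability
open Classical

/-! A nonempty word accepted by `V*` splits as `α₁ ++ α₂` with `α₁` accepted by `V` and `α₂`
by `V*`; the split is unique because `Dom O_V` is prefix-free, and `O_{V*}` is multiplicative
over it. As `V` outputs single letters, this factorisation gives
`∑ O_{V*}(· ∣ ω :: β) = ∑ O_V(· ∣ [ω]) * ∑ O_{V*}(· ∣ β)`, and induction on `β` yields `1`;
the base case `β = []` is realised only by the empty word. The sums are taken in `ℝ≥0∞`,
where no summability side conditions arise. -/
open scoped ENNReal

theorem List.append_inj_of_prefixFree {A : Type*} {P : List A → Prop}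
    (hP : ∀ α γ, P α → P (α ++ γ) → γ = []) {α₁ α₂ β₁ β₂ : List A}
    (hα : P α₁) (hβ : P β₁) (h : α₁ ++ α₂ = β₁ ++ β₂) : α₁ = β₁ ∧ α₂ = β₂ := by
  obtain rfl : α₁ = β₁ := by
    rcases List.append_eq_append_iff.mp h with ⟨γ, rfl, -⟩ | ⟨γ, rfl, -⟩
    · rw [hP α₁ γ hα hβ, List.append_nil]
    · rw [hP β₁ γ hβ hα, List.append_nil]
  exact ⟨rfl, List.append_cancel_left h⟩

theorem ENNReal.tsum_eq_tsum_mul_tsum_of_prefixFree {A : Type*} {f g h : List A → ℝ≥0∞}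
    (hpf : ∀ α γ, g α ≠ 0 → g (α ++ γ) ≠ 0 → γ = [])
    (hmul : ∀ α₁ α₂, g α₁ ≠ 0 → h α₂ ≠ 0 → f (α₁ ++ α₂) = g α₁ * h α₂)
    (hsupp : ∀ α, f α ≠ 0 → ∃ α₁ α₂, α = α₁ ++ α₂ ∧ g α₁ ≠ 0 ∧ h α₂ ≠ 0) :
    ∑' α, f α = (∑' α, g α) * ∑' α, h α := by
  rw [← ENNReal.tsum_mul_right]
  simp_rw [← ENNReal.tsum_mul_left]
  rw [← ENNReal.tsum_prod]
  refine tsum_eq_tsum_of_ne_zero_bij (fun p => p.1.1 ++ p.1.2) ?_ ?_ ?_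
  · rintro ⟨⟨α₁, α₂⟩, hα⟩ ⟨⟨β₁, β₂⟩, hβ⟩ h
    simp only [Function.mem_support, ne_eq, mul_eq_zero, not_or] at hα hβ
    obtain ⟨rfl, rfl⟩ := List.append_inj_of_prefixFree (P := (g · ≠ 0)) hpf hα.1 hβ.1 h
    rfl
  · intro α hα
    obtain ⟨α₁, α₂, rfl, h₁, h₂⟩ := hsupp α hα
    exact ⟨⟨(α₁, α₂), by simp [h₁, h₂]⟩, rfl⟩
  · rintro ⟨⟨α₁, α₂⟩, hα⟩
    simp only [Function.mem_support, ne_eq, mul_eq_zero, not_or] at hα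
    exact hmul α₁ α₂ hα.1 hα.2

theorem ENNReal.tsum_coe_eq_one_iff {ι : Type*} {f : ι → ℝ≥0} :
    ∑' i, (f i : ℝ≥0∞) = 1 ↔ ∑' i, f i = 1 := by
  constructor
  · intro h
    have hs : Summable f := ENNReal.tsum_coe_ne_top_iff_summable.mp (h ▸ ENNReal.one_ne_top)
    exact_mod_cast (ENNReal.coe_tsum hs).trans h
  · intro h
    have hs : Summable f := by
      by_contra hs
      rw [tsum_eq_zero_of_not_summable hs] at h
      exact zero_ne_one h
    rw [← ENNReal.coe_tsum hs, h, ENNReal.coe_one]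

namespace Transducer

variable {A Q M : Type} [Monoid M]

def run (T : Transducer A Q M) : Q → List A → Option (Q × M)
  | q, [] => some (q, 1)
  | q, a :: w => (T.step q a).bind fun x => (T.run x.1 w).map fun y => (y.1, x.2 * y.2)

theorem run_cons_eq_some {T : Transducer A Q M} {q p : Q} {a : A} {w : List A} {n : M} :
    T.run q (a :: w) = some (p, n) ↔
      ∃ q' m m', T.step q a = some (q', m) ∧ T.run q' w = some (p, m') ∧ n = m * m' := by
  simp only [run, Option.bind_eq_some_iff, Option.map_eq_some_iff, Prod.mk.injEq]
  aesop

theorem dstar_eq_run (T : Transducer A Q M) (q : Q) (α : List A) :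
    T.dstar q α = (T.run q α).map Prod.fst := by
  induction α generalizing q with
  | nil => rfl
  | cons a w ih =>
    simp [dstar, run, delta, ih, Option.map_bind, Option.bind_map, Function.comp_def]

theorem lstar_eq_run (T : Transducer A Q M) (q : Q) (α : List A) :
    T.lstar q α = (T.run q α).map Prod.snd := by
  induction α generalizing q with
  | nil => rfl
  | cons a w ih => simp [lstar, run, ih, Option.map_bind, Function.comp_def]

theorem O_eq_run (T : Transducer A Q M) (q : Q) (α : List A) :
    T.O q α = (T.run q α).bind fun x => (T.rho x.1).map (x.2 * ·) := by
  rw [O, dstar_eq_run, lstar_eq_run]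
  cases T.run q α <;> rfl

theorem run_append (T : Transducer A Q M) (q : Q) (α γ : List A) :
    T.run q (α ++ γ) =
      (T.run q α).bind fun x => (T.run x.1 γ).map fun y => (y.1, x.2 * y.2) := by
  induction α generalizing q with
  | nil => simp [run]
  | cons a w ih =>
    simp [run, ih, Option.map_bind, Option.bind_map, Option.bind_assoc, Function.comp_def,
      mul_assoc]

variable {V : Transducer A Q M}

theorem kstar_step_eq_some {q q'' : Q} {a : A} {m : M} :
    (kstar V).step q a = some (q'', m) ↔
      ∃ q', V.step q a = some (q', m) ∧ q'' = if (V.rho q').isSome then V.start else q' := by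
  simp only [kstar, Option.map_eq_some_iff, Prod.mk.injEq]
  aesop

theorem run_kstar_of_run_of_final (hnoout : ∀ q a, (V.rho q).isSome → V.delta q a = none)
    {α : List A} {q p : Q} {n : M} (hrun : V.run q α = some (p, n)) (hfin : (V.rho p).isSome)
    (hne : α ≠ []) : (kstar V).run q α = some (V.start, n) := by
  induction α generalizing q n with
  | nil => exact absurd rfl hne
  | cons a w ih =>
    obtain ⟨q', m, m', hstep, hw, rfl⟩ := run_cons_eq_some.mp hrun
    refine run_cons_eq_some.mpr ?_
    cases w with
    | nil =>
      obtain ⟨rfl, rfl⟩ : q' = p ∧ 1 = m' := by simpa [run] using hw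
      exact ⟨V.start, m, 1, kstar_step_eq_some.mpr ⟨q', hstep, by simp [hfin]⟩, rfl, rfl⟩
    | cons b w =>
      have hq' : ¬ (V.rho q').isSome := fun h => by
        obtain ⟨_, _, _, hb, -⟩ := run_cons_eq_some.mp hw
        simpa [delta, hb] using hnoout q' b h
      exact ⟨q', m, m', kstar_step_eq_some.mpr ⟨q', hstep, by simp [hq']⟩, ih hw (by simp), rfl⟩

theorem exists_append_of_run_kstar (hnoin : ∀ p a, V.delta p a ≠ some V.start)
    {α : List A} {q : Q} {n : M} (hrun : (kstar V).run q α = some (V.start, n)) (hne : α ≠ []) :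
    ∃ α₁ α₂ p n₁ n₂, α = α₁ ++ α₂ ∧ V.run q α₁ = some (p, n₁) ∧ (V.rho p).isSome ∧
      (kstar V).run V.start α₂ = some (V.start, n₂) ∧ n = n₁ * n₂ := by
  induction α generalizing q n with
  | nil => exact absurd rfl hne
  | cons a w ih =>
    obtain ⟨q'', m, m', hkstep, hw, rfl⟩ := run_cons_eq_some.mp hrun
    obtain ⟨q', hstep, rfl⟩ := kstar_step_eq_some.mp hkstep
    by_cases hfin : (V.rho q').isSome
    · rw [if_pos hfin] at hw
      exact ⟨[a], w, q', m, m', rfl, by simp [run, hstep], hfin, hw, by simp⟩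
    · rw [if_neg hfin] at hw
      have hwne : w ≠ [] := by
        rintro rfl
        obtain ⟨rfl, -⟩ : q' = V.start ∧ 1 = m' := by simpa [run] using hw
        exact hnoin q a (by simp [delta, hstep])
      obtain ⟨w₁, w₂, p, n₁, n₂, rfl, hw₁, hp, hw₂, rfl⟩ := ih hw hwne
      exact ⟨a :: w₁, w₂, p, m * n₁, n₂, rfl, run_cons_eq_some.mpr ⟨q', m, n₁, hstep, hw₁, rfl⟩,
        hp, hw₂, (mul_assoc _ _ _).symm⟩

theorem kstar_Ofull_eq_some_iff {α : List A} {x : M} :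
    (kstar V).Ofull α = some x ↔ (kstar V).run V.start α = some (V.start, x) := by
  simp only [Ofull, O_eq_run, Option.map_eq_some_iff, Option.bind_eq_some_iff]
  constructor
  · rintro ⟨_, ⟨⟨p, n⟩, hrun, r, hr, rfl⟩, rfl⟩
    simp only [kstar, Option.ite_none_right_eq_some, Option.some.injEq] at hr
    obtain ⟨rfl, rfl⟩ := hr
    simpa [kstar] using hrun
  · intro h
    exact ⟨x, ⟨_, h, 1, by simp [kstar], mul_one x⟩, one_mul x⟩

theorem Ofull_eq_some_iff (hinit : V.init = 1) (hrho1 : ∀ q m, V.rho q = some m → m = 1)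
    {α : List A} {x : M} :
    V.Ofull α = some x ↔ ∃ p, V.run V.start α = some (p, x) ∧ (V.rho p).isSome := by
  simp only [Ofull, O_eq_run, hinit, one_mul, Option.map_eq_some_iff, Option.bind_eq_some_iff]
  constructor
  · rintro ⟨_, ⟨⟨p, n⟩, hrun, r, hr, rfl⟩, rfl⟩
    obtain rfl := hrho1 p r hr
    exact ⟨p, by simpa using hrun, by simp [hr]⟩
  · rintro ⟨p, hrun, hfin⟩
    obtain ⟨r, hr⟩ := Option.isSome_iff_exists.mp hfin
    obtain rfl := hrho1 p r hr
    exact ⟨x, ⟨_, hrun, 1, hr, mul_one x⟩, rfl⟩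

theorem kstar_Ofull_nil : (kstar V).Ofull [] = some 1 :=
  kstar_Ofull_eq_some_iff.mpr rfl

theorem eq_one_of_Ofull_nil (hinit : V.init = 1) (hrho1 : ∀ q m, V.rho q = some m → m = 1)
    {x : M} (h : V.Ofull [] = some x) : x = 1 := by
  obtain ⟨p, hrun, -⟩ := (Ofull_eq_some_iff hinit hrho1).mp h
  simp only [run, Option.some.injEq, Prod.mk.injEq] at hrun
  exact hrun.2.symm

theorem kstar_Ofull_append (hnoout : ∀ q a, (V.rho q).isSome → V.delta q a = none)
    (hinit : V.init = 1) (hrho1 : ∀ q m, V.rho q = some m → m = 1) {α₁ α₂ : List A} {n₁ n₂ : M}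
    (h₁ : V.Ofull α₁ = some n₁) (hne : α₁ ≠ []) (h₂ : (kstar V).Ofull α₂ = some n₂) :
    (kstar V).Ofull (α₁ ++ α₂) = some (n₁ * n₂) := by
  obtain ⟨p, hrun, hfin⟩ := (Ofull_eq_some_iff hinit hrho1).mp h₁
  rw [kstar_Ofull_eq_some_iff, run_append, run_kstar_of_run_of_final hnoout hrun hfin hne]
  simp [kstar_Ofull_eq_some_iff.mp h₂]

theorem exists_append_of_kstar_Ofull (hnoin : ∀ p a, V.delta p a ≠ some V.start)
    (hinit : V.init = 1) (hrho1 : ∀ q m, V.rho q = some m → m = 1) {α : List A} {x : M}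
    (h : (kstar V).Ofull α = some x) (hne : α ≠ []) :
    ∃ α₁ α₂ n₁ n₂, α = α₁ ++ α₂ ∧ V.Ofull α₁ = some n₁ ∧ (kstar V).Ofull α₂ = some n₂ ∧
      x = n₁ * n₂ := by
  obtain ⟨α₁, α₂, p, n₁, n₂, rfl, h₁, hp, h₂, rfl⟩ :=
    exists_append_of_run_kstar hnoin (kstar_Ofull_eq_some_iff.mp h) hne
  exact ⟨α₁, α₂, n₁, n₂, rfl, (Ofull_eq_some_iff hinit hrho1).mpr ⟨p, h₁, hp⟩,
    kstar_Ofull_eq_some_iff.mpr h₂, rfl⟩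

end Transducer

theorem listMonoid_one_eq_nil {Ω : Type} : (1 : List Ω) = [] := rfl

theorem listMonoid_mul_eq_append {Ω : Type} (l₁ l₂ : List Ω) : l₁ * l₂ = l₁ ++ l₂ := rfl

section CondProb

open Transducer

variable {A Ω Q : Type}

theorem condVal_of_Ofull_eq_some {T : Transducer A Q (List Ω × ℝ≥0)} {β : List Ω} {α : List A}
    {x : List Ω × ℝ≥0} (h : T.Ofull α = some x) :
    condVal T β α = if x.1 = β then x.2 else 0 := by
  simp [condVal, h]

theorem exists_Ofull_of_condVal_ne_zero {T : Transducer A Q (List Ω × ℝ≥0)} {β : List Ω}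
    {α : List A} (h : condVal T β α ≠ 0) : ∃ x, T.Ofull α = some x ∧ x.1 = β := by
  unfold condVal at h
  split at h
  · exact ⟨_, ‹_›, by by_contra hne; simp [hne] at h⟩
  · exact absurd rfl h

variable {V : Transducer A Q (List Ω × ℝ≥0)}

theorem condVal_kstar_append (hnoout : ∀ q a, (V.rho q).isSome → V.delta q a = none)
    (hinit : V.init = 1) (hrho1 : ∀ q m, V.rho q = some m → m = 1) {α₁ α₂ : List A}
    {n₁ n₂ : List Ω × ℝ≥0} {ω : Ω} (β : List Ω) (h₁ : V.Ofull α₁ = some n₁) (hω : n₁.1 = [ω])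
    (h₂ : (kstar V).Ofull α₂ = some n₂) :
    condVal (kstar V) (ω :: β) (α₁ ++ α₂) = condVal V [ω] α₁ * condVal (kstar V) β α₂ := by
  have hne : α₁ ≠ [] := by
    rintro rfl
    simp [eq_one_of_Ofull_nil hinit hrho1 h₁, listMonoid_one_eq_nil] at hω
  rw [condVal_of_Ofull_eq_some (kstar_Ofull_append hnoout hinit hrho1 h₁ hne h₂),
    condVal_of_Ofull_eq_some h₁, condVal_of_Ofull_eq_some h₂, if_pos hω]
  simp only [Prod.fst_mul, Prod.snd_mul, listMonoid_mul_eq_append, hω, List.singleton_append,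
    List.cons.injEq, true_and, mul_ite, mul_zero]

theorem tsum_condVal_kstar_nil (hnoin : ∀ p a, V.delta p a ≠ some V.start)
    (hinit : V.init = 1) (hrho1 : ∀ q m, V.rho q = some m → m = 1)
    (hsingle : ∀ α x, V.Ofull α = some x → ∃ ω, x.1 = [ω]) :
    ∑' α, (condVal (kstar V) [] α : ℝ≥0∞) = 1 := by
  rw [tsum_eq_single []]
  · simp [condVal_of_Ofull_eq_some kstar_Ofull_nil, listMonoid_one_eq_nil]
  · intro α hα
    rw [ENNReal.coe_eq_zero]
    by_contra h
    obtain ⟨x, hx, hx1⟩ := exists_Ofull_of_condVal_ne_zero h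
    obtain ⟨α₁, α₂, n₁, n₂, -, h₁, -, rfl⟩ := exists_append_of_kstar_Ofull hnoin hinit hrho1 hx hα
    obtain ⟨ω, hω⟩ := hsingle α₁ n₁ h₁
    simp [listMonoid_mul_eq_append, hω] at hx1

theorem tsum_condVal_kstar_cons
    (hpf : ∀ α γ, (V.Ofull α).isSome → (V.Ofull (α ++ γ)).isSome → γ = [])
    (hnoin : ∀ p a, V.delta p a ≠ some V.start)
    (hnoout : ∀ q a, (V.rho q).isSome → V.delta q a = none)
    (hinit : V.init = 1) (hrho1 : ∀ q m, V.rho q = some m → m = 1)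
    (hsingle : ∀ α x, V.Ofull α = some x → ∃ ω, x.1 = [ω]) (ω : Ω) (β : List Ω) :
    ∑' α, (condVal (kstar V) (ω :: β) α : ℝ≥0∞) =
      (∑' α, (condVal V [ω] α : ℝ≥0∞)) * ∑' α, (condVal (kstar V) β α : ℝ≥0∞) := by
  refine ENNReal.tsum_eq_tsum_mul_tsum_of_prefixFree ?_ ?_ ?_
  · intro α γ h h'
    simp only [ne_eq, ENNReal.coe_eq_zero] at h h'
    obtain ⟨x, hx, -⟩ := exists_Ofull_of_condVal_ne_zero h
    obtain ⟨y, hy, -⟩ := exists_Ofull_of_condVal_ne_zero h'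
    exact hpf α γ (by simp [hx]) (by simp [hy])
  · intro α₁ α₂ h₁ h₂
    simp only [ne_eq, ENNReal.coe_eq_zero] at h₁ h₂
    obtain ⟨n₁, hn₁, hω⟩ := exists_Ofull_of_condVal_ne_zero h₁
    obtain ⟨n₂, hn₂, -⟩ := exists_Ofull_of_condVal_ne_zero h₂
    rw [condVal_kstar_append hnoout hinit hrho1 β hn₁ hω hn₂, ENNReal.coe_mul]
  · intro α h
    simp only [ne_eq, ENNReal.coe_eq_zero] at h
    obtain ⟨x, hx, hx1⟩ := exists_Ofull_of_condVal_ne_zero h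
    have hne : α ≠ [] := by
      rintro rfl
      rw [kstar_Ofull_nil, Option.some_inj] at hx
      simp [← hx, listMonoid_one_eq_nil] at hx1
    obtain ⟨α₁, α₂, n₁, n₂, rfl, h₁, h₂, rfl⟩ :=
      exists_append_of_kstar_Ofull hnoin hinit hrho1 hx hne
    obtain ⟨ω', hω'⟩ := hsingle α₁ n₁ h₁
    obtain rfl : ω' = ω := by
      simp only [Prod.fst_mul, listMonoid_mul_eq_append, hω'] at hx1
      exact (List.cons.inj hx1).1
    rw [condVal_kstar_append hnoout hinit hrho1 β h₁ hω' h₂, mul_eq_zero, not_or] at h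
    exact ⟨α₁, α₂, rfl, by simpa using h.1, by simpa using h.2⟩

end CondProb

theorem stmt12_general {A Ω Q : Type} (V : Transducer A Q (List Ω × ℝ≥0))
    (hpf : ∀ α γ, (V.Ofull α).isSome → (V.Ofull (α ++ γ)).isSome → γ = [])
    (hnoin : ∀ p a, V.delta p a ≠ some V.start)
    (hnoout : ∀ q a, (V.rho q).isSome → V.delta q a = none)
    (hinit : V.init = 1)
    (hrho1 : ∀ q m, V.rho q = some m → m = 1)
    (hrange : {β | ∃ α x, V.Ofull α = some x ∧ x.1 = β} = {β | ∃ ω : Ω, β = [ω]})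
    (hcond : CondProb V) :
    CondProb (kstar V) := by
  have hsingle : ∀ α x, V.Ofull α = some x → ∃ ω, x.1 = [ω] := fun α x h => by
    have hx : x.1 ∈ {β | ∃ α x, V.Ofull α = some x ∧ x.1 = β} := ⟨α, x, h, rfl⟩
    rwa [hrange] at hx
  have hV : ∀ ω, ∑' α, (condVal V [ω] α : ℝ≥0∞) = 1 := fun ω => by
    have hω : [ω] ∈ {β | ∃ α x, V.Ofull α = some x ∧ x.1 = β} := by rw [hrange]; exact ⟨ω, rfl⟩
    exact ENNReal.tsum_coe_eq_one_iff.mpr (hcond [ω] hω)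
  have hstar : ∀ β, ∑' α, (condVal (kstar V) β α : ℝ≥0∞) = 1 := by
    intro β
    induction β with
    | nil => exact tsum_condVal_kstar_nil hnoin hinit hrho1 hsingle
    | cons ω β ih =>
      rw [tsum_condVal_kstar_cons hpf hnoin hnoout hinit hrho1 hsingle, hV, ih, one_mul]
  exact fun β _ => ENNReal.tsum_coe_eq_one_iff.mp (hstar β)

/-- the Kleene star of a conditional probabilistic transducer
satisfying the Kleene-star preconditions is conditional probabilistic. -/
theorem stmt12 {A Ω Q : Type} (V : Transducer A Q (List Ω × ℝ≥0))
    (hpf : ∀ α γ, (V.Ofull α).isSome → (V.Ofull (α ++ γ)).isSome → γ = [])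
    (hnoin : ∀ p a, V.delta p a ≠ some V.start)
    (hnoout : ∀ q a, (V.rho q).isSome → V.delta q a = none)
    (hsnf : V.rho V.start = none)
    (hinit : V.init = 1)
    (hrho1 : ∀ q m, V.rho q = some m → m = 1)
    (hrange : {β | ∃ α x, V.Ofull α = some x ∧ x.1 = β} = {β | ∃ ω : Ω, β = [ω]})
    (hcond : CondProb V) :
    CondProb (kstar V) :=
  stmt12_general V hpf hnoin hnoout hinit hrho1 hrange hcond
end

section
/- Let W be a monotonic probabilistic failure transducer without failure cycles over ⟨ℝ₊,×,1⟩, and for each state q let S(q) := Σ_{α ∈ Dom(O_W^q)} O_W^q(α) (which exists and is positive). Define the pushed transducer W_C with the same states, transitions, and failure transitions, but with λ_C(p,a) := λ(p,a)·S(δ(p,a))/S(p), ι_C := ι·S(s), ρ_C(p) := ρ(p)/S(p), and φ_C(p) := φ(p)·S(f(p))/S(p). Then for every state p and word α with δ_f*(p,α) defined, λ_{C,f}*(p,α) = λ_f*(p,α)·S(δ_f*(p,α))/S(p); consequently O_{W_C} = O_W. -/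
open scoped NNReal Computability
open Classical

/-!
Weight pushing is a diagonal change of gauge: every transition out of `p` into `q` is
multiplied by `S q / S p`, so along any completed path from `p` to `q` the factors
telescope to `S q / S p`, failure transitions included. The initial weight `ι · S s` and
the final weights `ρ q / S q` cancel the two remaining ends, so every accepted word keeps
its weight.
-/

theorem mul_div_mul_mul_div_eq {M : Type*} [CommGroupWithZero M] {a b x y z : M} (hx : x ≠ 0) :
    a * x / y * (b * z / x) = a * b * z / y := by
  field_simp

namespace FailTransducer

variable {A Q M : Type} [CommGroupWithZero M]

@[simps]
def push (W : FailTransducer A Q M) (S : Q → M) : FailTransducer A Q M where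
  start := W.start
  step p a := (W.step p a).map fun x => (x.1, x.2 * S x.1 / S p)
  init := W.init * S W.start
  rho p := (W.rho p).map fun r => r / S p
  failStep p := (W.failStep p).map fun x => (x.1, x.2 * S x.1 / S p)

variable {W : FailTransducer A Q M} {S : Q → M}

theorem DF.push (hS : ∀ q, S q ≠ 0) {p : Q} {a : A} {q : Q} {m : M} (h : W.DF p a q m) :
    (W.push S).DF p a q (m * S q / S p) := by
  induction h with
  | base h => exact .base (by simp [h])
  | @fail p a r mf q m hstep hfail _ ih =>
    rw [← mul_div_mul_mul_div_eq (hS r)]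
    exact .fail (by simp [hstep]) (by simp [hfail]) ih

theorem DF.of_push (hS : ∀ q, S q ≠ 0) {p : Q} {a : A} {q : Q} {m' : M}
    (h : (W.push S).DF p a q m') : ∃ m, W.DF p a q m ∧ m' = m * S q / S p := by
  induction h with
  | base h =>
    obtain ⟨⟨q, m⟩, hx, hpush⟩ := Option.map_eq_some_iff.mp h
    obtain ⟨rfl, rfl⟩ := Prod.mk.inj hpush
    exact ⟨m, .base hx, rfl⟩
  | fail hstep hfail _ ih =>
    obtain ⟨m, hm, rfl⟩ := ih
    obtain ⟨⟨r, mf⟩, hW, hpush⟩ := Option.map_eq_some_iff.mp hfail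
    obtain ⟨rfl, rfl⟩ := Prod.mk.inj hpush
    exact ⟨mf * m, .fail (Option.map_eq_none_iff.mp hstep) hW hm,
      mul_div_mul_mul_div_eq (hS r)⟩

theorem DFStar.push (hS : ∀ q, S q ≠ 0) {p : Q} {α : List A} {q : Q} {m : M}
    (h : W.DFStar p α q m) : (W.push S).DFStar p α q (m * S q / S p) := by
  induction h with
  | @nil q => rw [one_mul, div_self (hS q)]; exact .nil
  | @cons p a w q m r m' hstep _ ih =>
    rw [← mul_div_mul_mul_div_eq (hS q)]
    exact .cons (hstep.push hS) ih

theorem DFStar.of_push (hS : ∀ q, S q ≠ 0) {p : Q} {α : List A} {q : Q} {m' : M}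
    (h : (W.push S).DFStar p α q m') : ∃ m, W.DFStar p α q m ∧ m' = m * S q / S p := by
  induction h with
  | @nil q => exact ⟨1, .nil, by rw [one_mul, div_self (hS q)]⟩
  | cons hstep _ ih =>
    obtain ⟨m, hm, rfl⟩ := hstep.of_push hS
    obtain ⟨m', hm', rfl⟩ := ih
    exact ⟨m * m', .cons hm hm', mul_div_mul_mul_div_eq (hS _)⟩

theorem push_oRel_iff (hS : ∀ q, S q ≠ 0) {q : Q} {α : List A} {m : M} :
    (W.push S).ORel q α m ↔ W.ORel q α (m * S q) := by
  constructor
  · rintro ⟨p, m', r, hd, hr, rfl⟩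
    obtain ⟨m', hm', rfl⟩ := hd.of_push hS
    obtain ⟨r, hWr, rfl⟩ := Option.map_eq_some_iff.mp hr
    refine ⟨p, m', r, hm', hWr, ?_⟩
    field_simp [hS p, hS q]
  · rintro ⟨p, m', r, hd, hr, h⟩
    refine ⟨p, m' * S p / S q, r / S p, hd.push hS, by simp [hr], ?_⟩
    field_simp [hS p, hS q]
    exact h

theorem push_oFullRel_iff (hS : ∀ q, S q ≠ 0) {α : List A} {m : M} :
    (W.push S).OFullRel α m ↔ W.OFullRel α m := by
  constructor
  · rintro ⟨m', hm', rfl⟩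
    refine ⟨m' * S W.start, (push_oRel_iff hS).mp hm', ?_⟩
    rw [push_init, mul_right_comm, mul_assoc]
  · rintro ⟨m', hm', rfl⟩
    refine ⟨m' / S W.start, (push_oRel_iff hS).mpr ?_, ?_⟩
    · rwa [push_start, div_mul_cancel₀ _ (hS W.start)]
    · rw [push_init, mul_assoc, mul_div_cancel₀ _ (hS W.start)]

end FailTransducer

theorem stmt17_general {A Q : Type}
    (W WC : FailTransducer A Q ℝ≥0)
    (Sv : Q → ℝ≥0)
    (hSpos : ∀ q, 0 < Sv q)
    (hstep : ∀ p a, WC.step p a = (W.step p a).map fun x => (x.1, x.2 * Sv x.1 / Sv p))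
    (hfailStep : ∀ p, WC.failStep p = (W.failStep p).map fun x => (x.1, x.2 * Sv x.1 / Sv p))
    (hrho : ∀ p, WC.rho p = (W.rho p).map fun r => r / Sv p)
    (hinit : WC.init = W.init * Sv W.start)
    (hstart : WC.start = W.start) :
    (∀ p (α : List A) q m, W.DFStar p α q m → WC.DFStar p α q (m * Sv q / Sv p)) ∧
    (∀ α m, WC.OFullRel α m ↔ W.OFullRel α m) := by
  have hS : ∀ q, Sv q ≠ 0 := fun q => (hSpos q).ne'
  obtain rfl : WC = W.push Sv := by
    obtain ⟨⟨start, step, init, rho⟩, failStep⟩ := WC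
    simp only at hstart hinit
    subst hstart hinit
    congr <;> funext <;> simp_all
  exact ⟨fun _ _ _ _ h => h.push hS, fun _ _ => FailTransducer.push_oFullRel_iff hS⟩

/-- weight pushing: the pushed transducer `W_C` satisfies
`λ_{C,f}*(p,α) = λ_f*(p,α)·S(δ_f*(p,α))/S(p)` and represents the same function as
`W`. -/
theorem stmt17 {A Q : Type} [Fintype A] [Fintype Q]
    (W WC : FailTransducer A Q ℝ≥0)
    (hmono : W.Monotonic) (hprob : W.Probabilistic) (hnc : W.NoFailCycles)
    (Sv : Q → ℝ≥0)
    (hS : ∀ q, Sv q = ∑' α : List A, ((W.Ofun q α).getD 0))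
    (hSpos : ∀ q, 0 < Sv q)
    (hstep : ∀ p a, WC.step p a = (W.step p a).map fun x => (x.1, x.2 * Sv x.1 / Sv p))
    (hfailStep : ∀ p, WC.failStep p = (W.failStep p).map fun x => (x.1, x.2 * Sv x.1 / Sv p))
    (hrho : ∀ p, WC.rho p = (W.rho p).map fun r => r / Sv p)
    (hinit : WC.init = W.init * Sv W.start)
    (hstart : WC.start = W.start) :
    (∀ p (α : List A) q m, W.DFStar p α q m → WC.DFStar p α q (m * Sv q / Sv p)) ∧
    (∀ α m, WC.OFullRel α m ↔ W.OFullRel α m) :=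
  stmt17_general W WC Sv hSpos hstep hfailStep hrho hinit hstart
end
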